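/- Let d ≥ 1, m = 2d, and r, t ∈ ℂ satisfy the unitarity constraints |r|² + (m−1)|t|² = 1 and (m−2)|t|² + conj(r)·t + r·conj(t) = 0. Define R(n) = Σ_{a∈(Fin m)^n} |Ξ(a)|² · ⟨e(a_1)+⋯+e(a_n), e(a_n)⟩ and K = |(r−t)/√m + √m·t|². Then K ≠ 0 and for every n ≥ 1, R(n+1) = (|r|² − |t|²)·R(n) + 1/K. -/

import Mathlib

noncomputable section

open scoped BigOperators ComplexConjugate RealInnerProductSpace

/-- `Ξ(a_1, …, a_n) = ∏_{j=1}^{n-1} (t + (r - t) δ_{a_j, a_{j+1}})` (empty product is 1). -/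
def Xi (m n : ℕ) (r t : ℂ) (a : Fin n → Fin m) : ℂ :=
  ∏ j : Fin n, if h : (j : ℕ) + 1 < n then
    (t + (r - t) * (if a j = a ⟨(j : ℕ) + 1, h⟩ then 1 else 0)) else 1

/-- The `2d` signed standard basis vectors of `ℝ^d`: `e(2k) = u_k`, `e(2k+1) = -u_k`. -/
def eR (d : ℕ) (a : Fin (2 * d)) : EuclideanSpace ℝ (Fin d) :=
  EuclideanSpace.single ⟨(a : ℕ) / 2, by have := a.2; omega⟩
    (if (a : ℕ) % 2 = 0 then 1 else -1)

/-- The normalization constant `K = |(r-t)/√m + √m t|²` with `m = 2d`. -/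
def K (d : ℕ) (r t : ℂ) : ℝ :=
  ‖(r - t) / (Real.sqrt (2 * d) : ℂ) + (Real.sqrt (2 * d) : ℂ) * t‖ ^ 2

/-- The dispersion `𝒟(n) = K Σ_a ‖e(a_1)+⋯+e(a_n)‖² |Ξ(a)|²` of the phase-averaged
quantum walk with random phase shifts. -/
def Dsp (d : ℕ) (r t : ℂ) (n : ℕ) : ℝ :=
  K d r t * ∑ a : Fin n → Fin (2 * d),
    ‖∑ j : Fin n, eR d (a j)‖ ^ 2 * ‖Xi (2 * d) n r t a‖ ^ 2

/-- The auxiliary sum `R(n) = Σ_a |Ξ(a)|² ⟨e(a_1)+⋯+e(a_n), e(a_n)⟩`. -/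
def Rsum (d : ℕ) (r t : ℂ) (n : ℕ) : ℝ :=
  if hn : 0 < n then
    ∑ a : Fin n → Fin (2 * d), ‖Xi (2 * d) n r t a‖ ^ 2 *
      ⟪(∑ j : Fin n, eR d (a j)), eR d (a ⟨n - 1, by omega⟩)⟫
  else 0

/-!
Appending a step `c` to a path `b` multiplies `|Ξ|²` by the weight `w(c) = |r|²` if `c`
repeats the last step `b_n`, and `w(c) = |t|²` otherwise. These weights sum to
`|r|² + (m-1)|t|² = 1`, and since the `e(c)` sum to zero,
`Σ_c w(c) ⟨S, e(c)⟩ = (|r|² - |t|²) ⟨S, e(b_n)⟩` for `S = e(b_1) + ⋯ + e(b_n)`. Hence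
`R(n+1) = (|r|² - |t|²) R(n) + Σ_b |Ξ(b)|²`, and the total mass `Σ_b |Ξ(b)|²` is `m` by
induction on the length. Finally `m K = |r + (m-1) t|²`, which is `1` by the two unitarity
constraints, so `1/K = m`.
-/

open Finset

theorem Fintype.sum_ite_eq_mul {α R : Type*} [Fintype α] [DecidableEq α] [CommRing R]
    (x : α) (A B : R) (g : α → R) :
    ∑ c, (if x = c then A else B) * g c = (A - B) * g x + B * ∑ c, g c := by
  have h : ∀ c, (if x = c then A else B) * g c = B * g c + if x = c then (A - B) * g c else 0 :=
    fun c => by split <;> ring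
  simp_rw [h, sum_add_distrib, ← mul_sum, Fintype.sum_ite_eq]
  ring

theorem sum_pi_fin_succ_eq_sum_snoc {α M : Type*} [Fintype α] [AddCommMonoid M] (n : ℕ)
    (f : (Fin (n + 1) → α) → M) :
    ∑ a, f a = ∑ b : Fin n → α, ∑ c, f (Fin.snoc b c) := by
  rw [← (Fin.snocEquiv fun _ => α).sum_comp, Fintype.sum_prod_type, sum_comm]
  rfl

section Xi

variable {m : ℕ} (r t : ℂ)

theorem Xi_succ (n : ℕ) (a : Fin (n + 1) → Fin m) :
    Xi m (n + 1) r t a =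
      ∏ j : Fin n, (t + (r - t) * if a j.castSucc = a j.succ then 1 else 0) := by
  rw [Xi, Fin.prod_univ_castSucc, dif_neg (by simp), mul_one]
  refine prod_congr rfl fun j _ => ?_
  rw [dif_pos (by simp)]
  rfl

theorem Xi_snoc (k : ℕ) (b : Fin (k + 1) → Fin m) (c : Fin m) :
    Xi m (k + 2) r t (Fin.snoc b c) =
      Xi m (k + 1) r t b * (t + (r - t) * if b (Fin.last k) = c then 1 else 0) := by
  rw [Xi_succ, Xi_succ, Fin.prod_univ_castSucc]
  simp only [Fin.succ_castSucc, Fin.snoc_castSucc, Fin.succ_last, Fin.snoc_last]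

theorem norm_sq_Xi_snoc (k : ℕ) (b : Fin (k + 1) → Fin m) (c : Fin m) :
    ‖Xi m (k + 2) r t (Fin.snoc b c)‖ ^ 2 =
      (if b (Fin.last k) = c then ‖r‖ ^ 2 else ‖t‖ ^ 2) * ‖Xi m (k + 1) r t b‖ ^ 2 := by
  rw [Xi_snoc, norm_mul, mul_pow, mul_comm]
  split_ifs <;> simp

variable {r t}

theorem sum_norm_sq_Xi (h : ‖r‖ ^ 2 + ((m : ℝ) - 1) * ‖t‖ ^ 2 = 1) (k : ℕ) :
    ∑ a : Fin (k + 1) → Fin m, ‖Xi m (k + 1) r t a‖ ^ 2 = m := by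
  induction k with
  | zero => simp [Xi_succ]
  | succ k ih =>
    have hmass (x : Fin m) : ∑ c, (if x = c then ‖r‖ ^ 2 else ‖t‖ ^ 2) = 1 := by
      have := Fintype.sum_ite_eq_mul x (‖r‖ ^ 2) (‖t‖ ^ 2) fun _ => 1
      simp only [mul_one, sum_const, card_univ, Fintype.card_fin, nsmul_eq_mul] at this
      linear_combination this + h
    simp_rw [sum_pi_fin_succ_eq_sum_snoc (k + 1), norm_sq_Xi_snoc, ← sum_mul, hmass, one_mul]
    exact ih

end Xi

section eR

variable (d : ℕ)

theorem inner_eR_self (a : Fin (2 * d)) : ⟪eR d a, eR d a⟫ = 1 := by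
  rw [eR, EuclideanSpace.inner_single_left]
  split_ifs <;> simp

theorem eR_add_eR_of_div_eq {a b : Fin (2 * d)} (hdiv : (b : ℕ) / 2 = a / 2)
    (hmod : (b : ℕ) % 2 ≠ a % 2) : eR d a + eR d b = 0 := by
  simp only [eR, hdiv, ← PiLp.single_add]
  have : (if (a : ℕ) % 2 = 0 then (1 : ℝ) else -1) + (if (b : ℕ) % 2 = 0 then 1 else -1) = 0 := by
    split_ifs <;> first | omega | norm_num
  simp [this]

theorem sum_eR : ∑ a : Fin (2 * d), eR d a = 0 := by
  let partner (a : Fin (2 * d)) : Fin (2 * d) :=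
    ⟨if (a : ℕ) % 2 = 0 then a + 1 else a - 1, by split_ifs <;> omega⟩
  refine sum_ninvolution partner (fun a => eR_add_eR_of_div_eq d ?_ ?_) (fun a _ h => ?_)
    (fun _ => mem_univ _) (fun a => Fin.ext ?_) <;>
  · simp only [partner, Fin.ext_iff] at *
    split_ifs at * <;> omega

theorem sum_ite_mul_inner_eR_add_one (x : Fin (2 * d)) (A B : ℝ) (v : EuclideanSpace ℝ (Fin d)) :
    ∑ c, (if x = c then A else B) * (⟪v, eR d c⟫ + 1) =
      (A - B) * ⟪v, eR d x⟫ + (A + ((2 * d : ℕ) - 1) * B) := by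
  rw [Fintype.sum_ite_eq_mul, sum_add_distrib, ← inner_sum, sum_eR, inner_zero_right, sum_const,
    card_univ, Fintype.card_fin, nsmul_eq_mul, mul_one, zero_add]
  ring

end eR

theorem Rsum_succ (d : ℕ) (r t : ℂ) (k : ℕ) :
    Rsum d r t (k + 1) = ∑ b : Fin (k + 1) → Fin (2 * d),
      ‖Xi (2 * d) (k + 1) r t b‖ ^ 2 * ⟪∑ j, eR d (b j), eR d (b (Fin.last k))⟫ :=
  dif_pos k.succ_pos

theorem Rsum_succ_succ (d : ℕ) (r t : ℂ) (k : ℕ) :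
    Rsum d r t (k + 2) = ∑ b : Fin (k + 1) → Fin (2 * d), ‖Xi (2 * d) (k + 1) r t b‖ ^ 2 *
      ∑ c, (if b (Fin.last k) = c then ‖r‖ ^ 2 else ‖t‖ ^ 2) * (⟪∑ j, eR d (b j), eR d c⟫ + 1) := by
  rw [Rsum_succ, sum_pi_fin_succ_eq_sum_snoc]
  refine sum_congr rfl fun b _ => ?_
  rw [mul_sum]
  refine sum_congr rfl fun c _ => ?_
  rw [norm_sq_Xi_snoc, Fin.sum_univ_castSucc]
  simp only [Fin.snoc_castSucc, Fin.snoc_last, inner_add_left, inner_eR_self]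
  ring

theorem norm_sq_add_mul_eq_one {m : ℝ} {r t : ℂ} (h1 : ‖r‖ ^ 2 + (m - 1) * ‖t‖ ^ 2 = 1)
    (h2 : ((m : ℂ) - 2) * ((‖t‖ ^ 2 : ℝ) : ℂ) + conj r * t + r * conj t = 0) :
    ‖r + ((m : ℂ) - 1) * t‖ ^ 2 = 1 := by
  apply Complex.ofReal_injective
  have h1' := congrArg Complex.ofReal h1
  push_cast at h1' h2 ⊢
  simp only [← Complex.mul_conj', map_add, map_mul, map_sub, map_one, Complex.conj_ofReal] at h1' h2 ⊢
  linear_combination h1' + ((m : ℂ) - 1) * h2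

theorem natCast_mul_K {d : ℕ} (hd : d ≠ 0) (r t : ℂ) :
    ((2 * d : ℕ) : ℝ) * K d r t = ‖r + (((2 * d : ℕ) : ℂ) - 1) * t‖ ^ 2 := by
  have hm : (0 : ℝ) < 2 * d := by positivity
  have hs : (Real.sqrt (2 * d) : ℂ) ≠ 0 := by exact_mod_cast (Real.sqrt_pos.mpr hm).ne'
  have hs2 : (Real.sqrt (2 * d) : ℂ) ^ 2 = 2 * d := by exact_mod_cast Real.sq_sqrt hm.le
  have hnorm : ‖(Real.sqrt (2 * d) : ℂ)‖ ^ 2 = 2 * d := by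
    rw [Complex.norm_real, Real.norm_of_nonneg (Real.sqrt_nonneg _), Real.sq_sqrt hm.le]
  calc ((2 * d : ℕ) : ℝ) * K d r t
      = ‖(Real.sqrt (2 * d) : ℂ) * ((r - t) / (Real.sqrt (2 * d) : ℂ) +
          (Real.sqrt (2 * d) : ℂ) * t)‖ ^ 2 := by
        rw [K, norm_mul, mul_pow, hnorm, Nat.cast_mul, Nat.cast_ofNat]
    _ = ‖r + (((2 * d : ℕ) : ℂ) - 1) * t‖ ^ 2 := by
        congr 2
        field_simp
        push_cast
        linear_combination t * hs2

/-- Eq. (54) of the paper: the recursion `R(n+1) = (|r|² - |t|²) R(n) + 1/K` for the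
auxiliary correlation sum of the quantum walk with random phase shifts, together with
`K ≠ 0`. -/
theorem Rsum_recursion (d : ℕ) (hd : 1 ≤ d) (r t : ℂ)
    (h1 : ‖r‖ ^ 2 + (((2 * d : ℕ) : ℝ) - 1) * ‖t‖ ^ 2 = 1)
    (h2 : (((2 * d : ℕ) : ℂ) - 2) * ((‖t‖ ^ 2 : ℝ) : ℂ) + conj r * t + r * conj t = 0) :
    K d r t ≠ 0 ∧
      ∀ n : ℕ, 1 ≤ n →
        Rsum d r t (n + 1) = (‖r‖ ^ 2 - ‖t‖ ^ 2) * Rsum d r t n + 1 / K d r t := by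
  have hK : ((2 * d : ℕ) : ℝ) * K d r t = 1 := by
    rw [natCast_mul_K (by omega), ← Complex.ofReal_natCast]
    exact norm_sq_add_mul_eq_one h1 (by exact_mod_cast h2)
  refine ⟨right_ne_zero_of_mul_eq_one hK, fun n hn => ?_⟩
  obtain ⟨k, rfl⟩ := Nat.exists_eq_add_of_le' hn
  rw [Rsum_succ_succ, Rsum_succ, one_div, inv_eq_of_mul_eq_one_left hK]
  simp_rw [sum_ite_mul_inner_eR_add_one, h1, mul_add, mul_one, sum_add_distrib,
    sum_norm_sq_Xi h1, mul_sum, mul_left_comm]
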